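/- Let (a, b, c, d, e) ∈ ℝ⁵ and suppose the zero set Z := {(x, y) ∈ ℝ² : a·x² + b·y² + c·x·y + d·x + e·y + 1 = 0} equals an ellipse {p ∈ ℝ² : dist(p, f₁) + dist(p, f₂) = s} for some f₁, f₂ ∈ ℝ² and some real s > dist(f₁, f₂) with s > 0. If e² − 4b − d² + 4a = 0 and d·e − 2c = 0, then f₁ = 0 or f₂ = 0; that is, the origin is one of the foci of the ellipse. -/

import Mathlib

/-!
Writing `w = (d/2, e/2)` and `k = d²/4 - a`, the two focal equations say exactly that
`Q(p) = (1 + ⟪w, p⟫)² - k ‖p‖²`: the conic is given in focus–directrix form with focus `0`.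
In the principal frame `m + X u + Y u⊥` of the ellipse (`m` its centre, `u` along the focal axis,
`X²/A² + Y²/B² = 1`) the origin has some coordinates `(x₀, y₀)`, and on the ellipse this form reads
`(c₀ + c₁ X + c₂ Y)² = k ((X - x₀)² + (Y - y₀)²)`. Evaluating at `(±A, 0)`, `(0, ±B)` and
`(3A/5, 4B/5)` gives relations between the coefficients which force `y₀ = 0` and
`x₀² = A² - B²`, i.e. the origin is one of the foci `(±√(A² - B²), 0)`.
-/

open RealInnerProductSpace

lemma exists_norm_eq_one_and_eq_norm_smul {E : Type*} [NormedAddCommGroup E] [NormedSpace ℝ E]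
    [Nontrivial E] (x : E) : ∃ u : E, ‖u‖ = 1 ∧ x = ‖x‖ • u := by
  by_cases hx : x = 0
  · obtain ⟨u, hu⟩ := exists_norm_eq E zero_le_one
    exact ⟨u, hu, by simp [hx]⟩
  · exact ⟨‖x‖⁻¹ • x, norm_smul_inv_norm hx, (smul_inv_smul₀ (norm_ne_zero_iff.mpr hx) x).symm⟩

section FocalConic

variable {A B C k c₀ c₁ c₂ x₀ y₀ : ℝ}

lemma focalConic_relations_of_ellipse_subset (hA : A ≠ 0) (hB : B ≠ 0)
    (hconic : ∀ X Y, B ^ 2 * X ^ 2 + A ^ 2 * Y ^ 2 = A ^ 2 * B ^ 2 →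
      (c₀ + c₁ * X + c₂ * Y) ^ 2 = k * ((X - x₀) ^ 2 + (Y - y₀) ^ 2)) :
    c₀ * c₁ = -k * x₀ ∧ c₀ * c₂ = -k * y₀ ∧ c₁ * c₂ = 0 ∧
      c₀ ^ 2 - k * (x₀ ^ 2 + y₀ ^ 2) = (k - c₁ ^ 2) * A ^ 2 ∧
      c₀ ^ 2 - k * (x₀ ^ 2 + y₀ ^ 2) = (k - c₂ ^ 2) * B ^ 2 := by
  have hA₁ := hconic A 0 (by ring)
  have hA₂ := hconic (-A) 0 (by ring)
  have hB₁ := hconic 0 B (by ring)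
  have hB₂ := hconic 0 (-B) (by ring)
  have h₅ := hconic (3 * A / 5) (4 * B / 5) (by ring)
  have h₁ : c₀ * c₁ = -k * x₀ := mul_left_cancel₀ hA (by linear_combination (hA₁ - hA₂) / 4)
  have h₂ : c₀ * c₂ = -k * y₀ := mul_left_cancel₀ hB (by linear_combination (hB₁ - hB₂) / 4)
  refine ⟨h₁, h₂, ?_, by linear_combination (hA₁ + hA₂) / 2, by linear_combination (hB₁ + hB₂) / 2⟩
  -- a rational point of the ellipse off its axes isolates the cross term
  refine mul_left_cancel₀ (mul_ne_zero hA hB) ?_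
  linear_combination (25 / 24) * (h₅ - (9 / 50) * (hA₁ + hA₂) - (16 / 50) * (hB₁ + hB₂)
    - (6 / 5) * A * h₁ - (8 / 5) * B * h₂)

/-- `(x₀, y₀)` is the focus and `c₀ + c₁ X + c₂ Y = 0` the directrix of the conic; `hfocus` says
that the focus is not on the directrix. -/
theorem focus_eq_of_ellipse_subset_focalConic (hCA : |C| < A)
    (hconic : ∀ X Y, (A ^ 2 - C ^ 2) * X ^ 2 + A ^ 2 * Y ^ 2 = A ^ 2 * (A ^ 2 - C ^ 2) →
      (c₀ + c₁ * X + c₂ * Y) ^ 2 = k * ((X - x₀) ^ 2 + (Y - y₀) ^ 2))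
    (hfocus : c₀ + c₁ * x₀ + c₂ * y₀ ≠ 0) :
    y₀ = 0 ∧ x₀ ^ 2 = C ^ 2 := by
  have hA : 0 < A := (abs_nonneg C).trans_lt hCA
  have hC : C ^ 2 < A ^ 2 := sq_lt_sq' (abs_lt.mp hCA).1 (abs_lt.mp hCA).2
  set B := √(A ^ 2 - C ^ 2)
  have hB : 0 < B := Real.sqrt_pos.mpr (by linarith)
  have hB2 : B ^ 2 = A ^ 2 - C ^ 2 := Real.sq_sqrt (by linarith)
  obtain ⟨h₁, h₂, h₁₂, hA', hB'⟩ := focalConic_relations_of_ellipse_subset (k := k) hA.ne' hB.ne'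
    (fun X Y hXY ↦ hconic X Y (by rw [← hB2]; exact hXY))
  have hk : k ≠ 0 := by
    rintro rfl
    have hc₀ : c₀ = 0 := by nlinarith [sq_nonneg (c₁ * A)]
    have hc₁ : c₁ = 0 := by simpa [hc₀, hA.ne'] using hA'
    have hc₂ : c₂ = 0 := by simpa [hc₀, hB.ne'] using hB'
    exact hfocus (by simp [hc₀, hc₁, hc₂])
  rcases mul_eq_zero.mp h₁₂ with hc₁ | hc₂
  · -- a focus on the minor axis is only possible for a circle
    subst hc₁
    have hx₀ : x₀ = 0 := by simpa [hk] using h₁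
    subst hx₀
    have hsum : k ^ 2 * A ^ 2 * (y₀ ^ 2 + C ^ 2) = 0 := by
      linear_combination (-B ^ 2) * (c₀ * c₂ - k * y₀) * h₂ + c₀ ^ 2 * (hB' - hA')
        + k * (B ^ 2 - A ^ 2) * hA' + k ^ 2 * A ^ 2 * hB2
    have hy₀C : y₀ ^ 2 + C ^ 2 = 0 := by simpa [hk, hA.ne'] using hsum
    constructor <;> nlinarith [sq_nonneg y₀, sq_nonneg C]
  · subst hc₂
    have hy₀ : y₀ = 0 := by simpa [hk] using h₂
    subst hy₀
    refine ⟨rfl, mul_left_cancel₀ (by positivity : k ^ 2 * B ^ 2 ≠ 0) ?_⟩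
    linear_combination k ^ 2 * x₀ ^ 2 * hB2 - A ^ 2 * (c₀ * c₁ - k * x₀) * h₁
      + c₀ ^ 2 * (hA' - hB') - c₀ ^ 2 * k * hB2 + k * C ^ 2 * hB'

end FocalConic

lemma sqrt_sub_sq_add_sq_eq_of_ellipse {A C X Y : ℝ} (hCA : |C| < A)
    (h : (A ^ 2 - C ^ 2) * X ^ 2 + A ^ 2 * Y ^ 2 = A ^ 2 * (A ^ 2 - C ^ 2)) :
    √((X - C) ^ 2 + Y ^ 2) = A - C * X / A := by
  have hA : 0 < A := (abs_nonneg C).trans_lt hCA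
  have hC : C ^ 2 < A ^ 2 := sq_lt_sq' (abs_lt.mp hCA).1 (abs_lt.mp hCA).2
  have hX : X ^ 2 ≤ A ^ 2 := by nlinarith [sq_nonneg Y]
  have hCX : C * X ≤ A * A := by nlinarith [sq_nonneg (C * X - A * A), sq_nonneg (C + X)]
  rw [show (X - C) ^ 2 + Y ^ 2 = (A - C * X / A) ^ 2 by field_simp; linear_combination h]
  exact Real.sqrt_sq (sub_nonneg.mpr ((div_le_iff₀ hA).mpr hCX))

section Frame

def perp (u : EuclideanSpace ℝ (Fin 2)) : EuclideanSpace ℝ (Fin 2) := !₂[-u 1, u 0]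

lemma inner_fin_two (x y : EuclideanSpace ℝ (Fin 2)) : ⟪x, y⟫ = x 0 * y 0 + x 1 * y 1 := by
  simp [PiLp.inner_apply, Fin.sum_univ_two, mul_comm]

lemma norm_sq_fin_two (x : EuclideanSpace ℝ (Fin 2)) : ‖x‖ ^ 2 = x 0 ^ 2 + x 1 ^ 2 := by
  simp [EuclideanSpace.real_norm_sq_eq, Fin.sum_univ_two]

variable {u : EuclideanSpace ℝ (Fin 2)}

lemma dist_add_smul_add_smul_perp (hu : ‖u‖ = 1) (m : EuclideanSpace ℝ (Fin 2)) (X Y X' Y' : ℝ) :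
    dist (m + X • u + Y • perp u) (m + X' • u + Y' • perp u) = √((X - X') ^ 2 + (Y - Y') ^ 2) := by
  have hu' : u 0 ^ 2 + u 1 ^ 2 = 1 := by rw [← norm_sq_fin_two, hu, one_pow]
  rw [dist_eq_norm, ← Real.sqrt_sq (norm_nonneg _), norm_sq_fin_two]
  congr 1
  simp only [perp, PiLp.sub_apply, PiLp.add_apply, PiLp.smul_apply, smul_eq_mul,
    Matrix.cons_val_zero, Matrix.cons_val_one, Matrix.cons_val_fin_one]
  linear_combination ((X - X') ^ 2 + (Y - Y') ^ 2) * hu'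

lemma exists_eq_add_smul_add_smul_perp (hu : ‖u‖ = 1) (m p : EuclideanSpace ℝ (Fin 2)) :
    ∃ X Y : ℝ, p = m + X • u + Y • perp u := by
  have hu' : u 0 ^ 2 + u 1 ^ 2 = 1 := by rw [← norm_sq_fin_two, hu, one_pow]
  refine ⟨⟪p - m, u⟫, ⟪p - m, perp u⟫, ?_⟩
  ext i
  fin_cases i <;> simp only [Fin.zero_eta, Fin.mk_one, inner_fin_two, perp, PiLp.sub_apply,
    PiLp.add_apply, PiLp.smul_apply, smul_eq_mul, Matrix.cons_val_zero, Matrix.cons_val_one,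
    Matrix.cons_val_fin_one]
  · linear_combination (m 0 - p 0) * hu'
  · linear_combination (m 1 - p 1) * hu'

lemma dist_add_dist_eq_of_ellipse (hu : ‖u‖ = 1) (m : EuclideanSpace ℝ (Fin 2)) {A C X Y : ℝ}
    (hCA : |C| < A) (h : (A ^ 2 - C ^ 2) * X ^ 2 + A ^ 2 * Y ^ 2 = A ^ 2 * (A ^ 2 - C ^ 2)) :
    dist (m + X • u + Y • perp u) (m - C • u) + dist (m + X • u + Y • perp u) (m + C • u)
      = 2 * A := by
  rw [show m - C • u = m + (-C) • u + (0 : ℝ) • perp u by module,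
    show m + C • u = m + C • u + (0 : ℝ) • perp u by module,
    dist_add_smul_add_smul_perp hu, dist_add_smul_add_smul_perp hu, sub_zero,
    sqrt_sub_sq_add_sq_eq_of_ellipse (by rwa [abs_neg]) (by rwa [neg_sq]),
    sqrt_sub_sq_add_sq_eq_of_ellipse hCA h]
  ring

theorem focus_eq_zero_of_ellipse_subset_focalConic {m w : EuclideanSpace ℝ (Fin 2)} {k A C : ℝ}
    (hu : ‖u‖ = 1) (hCA : |C| < A)
    (hconic : ∀ X Y : ℝ, (A ^ 2 - C ^ 2) * X ^ 2 + A ^ 2 * Y ^ 2 = A ^ 2 * (A ^ 2 - C ^ 2) →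
      (1 + ⟪w, m + X • u + Y • perp u⟫) ^ 2 = k * ‖m + X • u + Y • perp u‖ ^ 2) :
    m - C • u = 0 ∨ m + C • u = 0 := by
  obtain ⟨x₀, y₀, h₀⟩ := exists_eq_add_smul_add_smul_perp hu m 0
  have hinner (X Y : ℝ) :
      ⟪w, m + X • u + Y • perp u⟫ = ⟪w, m⟫ + ⟪w, u⟫ * X + ⟪w, perp u⟫ * Y := by
    simp only [inner_add_right, inner_smul_right]
    ring
  have hnorm (X Y : ℝ) : ‖m + X • u + Y • perp u‖ ^ 2 = (X - x₀) ^ 2 + (Y - y₀) ^ 2 := by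
    rw [← dist_zero_right, h₀, dist_add_smul_add_smul_perp hu, Real.sq_sqrt (by positivity)]
  have hfocus : 1 + ⟪w, m⟫ + ⟪w, u⟫ * x₀ + ⟪w, perp u⟫ * y₀ = 1 := by
    have h := hinner x₀ y₀
    rw [← h₀, inner_zero_right] at h
    linarith
  obtain ⟨hy₀, hx₀⟩ := focus_eq_of_ellipse_subset_focalConic (k := k) (c₀ := 1 + ⟪w, m⟫)
    (c₁ := ⟪w, u⟫) (c₂ := ⟪w, perp u⟫) (x₀ := x₀) (y₀ := y₀) hCA
    (fun X Y hXY ↦ by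
      have h := hconic X Y hXY
      rw [hinner, hnorm] at h
      linear_combination h)
    (by rw [hfocus]; exact one_ne_zero)
  rcases sq_eq_sq_iff_eq_or_eq_neg.mp hx₀ with hC | hC
  · right
    rw [h₀, hC, hy₀, zero_smul, add_zero]
  · left
    rw [h₀, hC, hy₀]
    module

end Frame

lemma conic_eq_focal_form {a b c d e : ℝ} (h1 : e ^ 2 - 4 * b - d ^ 2 + 4 * a = 0)
    (h2 : d * e - 2 * c = 0) (p : EuclideanSpace ℝ (Fin 2)) :
    a * (p 0) ^ 2 + b * (p 1) ^ 2 + c * (p 0) * (p 1) + d * (p 0) + e * (p 1) + 1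
      = (1 + ⟪!₂[d / 2, e / 2], p⟫) ^ 2 - (d ^ 2 / 4 - a) * ‖p‖ ^ 2 := by
  rw [inner_fin_two, norm_sq_fin_two]
  simp only [Matrix.cons_val_zero, Matrix.cons_val_one]
  linear_combination (-(p 1) ^ 2 / 4) * h1 - (p 0 * p 1 / 2) * h2

theorem origin_focus_of_focal_condition (a b c d e : ℝ)
    (f₁ f₂ : EuclideanSpace ℝ (Fin 2)) (s : ℝ) (hs : s > dist f₁ f₂)
    (hZ : {p : EuclideanSpace ℝ (Fin 2) |
        a * (p 0) ^ 2 + b * (p 1) ^ 2 + c * (p 0) * (p 1) + d * (p 0) + e * (p 1) + 1 = 0}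
      = {p : EuclideanSpace ℝ (Fin 2) | dist p f₁ + dist p f₂ = s})
    (h1 : e ^ 2 - 4 * b - d ^ 2 + 4 * a = 0) (h2 : d * e - 2 * c = 0) :
    f₁ = 0 ∨ f₂ = 0 := by
  obtain ⟨u, hu, hf⟩ := exists_norm_eq_one_and_eq_norm_smul (f₂ - f₁)
  set C := dist f₁ f₂ / 2
  set m := f₁ + C • u
  have hf₁ : f₁ = m - C • u := by module
  have hf₂ : f₂ = m + C • u := by
    rw [← dist_eq_norm, dist_comm] at hf
    rw [← sub_add_cancel f₂ f₁, hf]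
    module
  have hCA : |C| < s / 2 := by
    rw [abs_of_nonneg (by positivity)]
    linarith [show C = dist f₁ f₂ / 2 from rfl]
  rw [hf₁, hf₂]
  refine focus_eq_zero_of_ellipse_subset_focalConic (w := !₂[d / 2, e / 2]) (k := d ^ 2 / 4 - a)
    hu hCA fun X Y hXY ↦ ?_
  have hmem : m + X • u + Y • perp u ∈ {p | dist p f₁ + dist p f₂ = s} := by
    rw [Set.mem_ofPred_eq, hf₁, hf₂, dist_add_dist_eq_of_ellipse hu m hCA hXY]
    ring
  rw [← hZ, Set.mem_ofPred_eq, conic_eq_focal_form h1 h2] at hmem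
  linear_combination hmem
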